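/- arXiv:0904.0679 — 2 statements merged into one kernel-verified Lean document; each statement's English description precedes it below -/
import Mathlib

section
/- Let f be a quasi-polynomial of degree d with coefficient functions c_i of period s_i, and let a, b be positive integers. Define F(t) = ∑_{i=0}^{⌊at/b⌋} f(i) for nonnegative integers t. Then F agrees with a quasi-polynomial of degree d+1 whose t^{d+1} coefficient is constant (period 1), and whose t^i coefficient, for 0 ≤ i ≤ d, has period dividing lcm{S_d, S_{d-1}, ..., S_i}, where S_i = s_i·b/gcd(s_i, a). -/
/-!
Fix one summand `c_i(n) n^i` and write `m = N k + r` with `N = s_i`. By periodicity, the sum of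
`c_i(n) n^i` over a block of `N` consecutive integers is a polynomial of degree `≤ i` in `k`, whose
leading coefficient involves only the sum of `c_i` over a period. By Faulhaber's formula,
`∑_{n ≤ m} c_i(n) n^i` is therefore, on each residue class of `m` modulo `N`, a polynomial of degree
`≤ i + 1` in `m`, with leading coefficient independent of the class.

Now substitute `m = ⌊αt⌋ = αt - {αt}` with `α = a/b`. Shifting `t` by a multiple `L` of `b` leaves
`{αt}` unchanged and shifts `⌊αt⌋` by `aL/b`. After composing with `αX - {αt}`, the coefficient of
`t^l` depends only on the coefficients of degree `≥ l` in `m`; those of the `i`-th summand are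
constant above degree `i`, and are unchanged by the shift when `s_i ∣ aL/b`, which follows from
`S_i ∣ L`.
-/

open Finset Polynomial Function

namespace Polynomial

theorem coeff_comp_of_natDegree_le {R : Type*} [CommSemiring R] {p q : R[X]} {n : ℕ}
    (hp : p.natDegree ≤ n) (hq : q.natDegree ≤ 1) :
    (p.comp q).coeff n = p.coeff n * q.coeff 1 ^ n := by
  rw [comp_eq_sum_left, sum_over_range' _ (fun _ => by simp) (n + 1) (Nat.lt_succ_of_le hp),
    finsetSum_coeff, sum_range_succ, sum_eq_zero, zero_add, coeff_C_mul,
    ← coeff_pow_of_natDegree_le hq, mul_one]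
  intro j hj
  rw [coeff_C_mul, coeff_eq_zero_of_natDegree_lt (p := q ^ j), mul_zero]
  exact natDegree_pow_le.trans_lt <| by nlinarith [mem_range.1 hj]

theorem coeff_comp_eq_of_coeff_eq {R : Type*} [CommRing R] {p p' q : R[X]} {l : ℕ}
    (hq : q.natDegree ≤ 1) (h : ∀ j, l ≤ j → p.coeff j = p'.coeff j) :
    (p.comp q).coeff l = (p'.comp q).coeff l := by
  rw [← sub_eq_zero, ← coeff_sub, ← sub_comp]
  cases l with
  | zero => rw [sub_eq_zero.2 (ext fun j => h j j.zero_le), zero_comp, coeff_zero]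
  | succ l =>
    have hdeg : (p - p').natDegree ≤ l :=
      natDegree_le_iff_coeff_eq_zero.2 fun j hj => by rw [coeff_sub, h j hj, sub_self]
    exact coeff_eq_zero_of_natDegree_lt <| natDegree_comp_le.trans_lt <| by nlinarith

theorem natDegree_C_mul_X_sub_C_le {R : Type*} [Ring R] (α β : R) :
    (C α * X - C β).natDegree ≤ 1 := by
  simpa [sub_eq_add_neg] using natDegree_linear_le (a := α) (b := -β)

noncomputable def faulhaber (j : ℕ) : ℚ[X] :=
  C ((j + 1 : ℚ)⁻¹) * (bernoulli (j + 1) - C (_root_.bernoulli (j + 1)))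

theorem eval_faulhaber (j n : ℕ) : (faulhaber j).eval (n : ℚ) = ∑ k ∈ range n, (k : ℚ) ^ j := by
  rw [faulhaber, eval_mul, eval_C, eval_sub, eval_C, ← sum_range_pow_eq_bernoulli_sub,
    inv_mul_cancel_left₀ (by positivity)]

theorem natDegree_faulhaber_le (j : ℕ) : (faulhaber j).natDegree ≤ j + 1 :=
  natDegree_C_mul_le _ _ |>.trans <| natDegree_sub_le_iff_left (by simp) |>.2 <|
    natDegree_le_iff_coeff_eq_zero.2 fun i hi => by simp [coeff_bernoulli, hi.not_ge]

theorem coeff_faulhaber_succ (j : ℕ) : (faulhaber j).coeff (j + 1) = (j + 1 : ℚ)⁻¹ := by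
  simp [faulhaber, coeff_bernoulli]

noncomputable def indefiniteSum (p : ℚ[X]) : ℚ[X] :=
  p.sum fun j a => C a * faulhaber j

theorem eval_indefiniteSum (p : ℚ[X]) (n : ℕ) :
    (indefiniteSum p).eval (n : ℚ) = ∑ k ∈ range n, p.eval (k : ℚ) := by
  simp only [indefiniteSum, Polynomial.sum, eval_finsetSum, eval_mul, eval_C, eval_faulhaber,
    mul_sum]
  rw [sum_comm]
  simp only [eval_eq_sum, Polynomial.sum]

theorem natDegree_indefiniteSum_le {p : ℚ[X]} {D : ℕ} (hp : p.natDegree ≤ D) :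
    (indefiniteSum p).natDegree ≤ D + 1 :=
  natDegree_sum_le_of_forall_le _ _ fun j hj =>
    (natDegree_C_mul_le _ _).trans <| (natDegree_faulhaber_le j).trans <|
      Nat.succ_le_succ <| (le_natDegree_of_mem_supp j hj).trans hp

theorem coeff_indefiniteSum_succ {p : ℚ[X]} {D : ℕ} (hp : p.natDegree ≤ D) :
    (indefiniteSum p).coeff (D + 1) = p.coeff D / (D + 1) := by
  rw [indefiniteSum, sum_over_range' _ (fun _ => by simp) (D + 1) (Nat.lt_succ_of_le hp),
    finsetSum_coeff, sum_range_succ, sum_eq_zero, zero_add, coeff_C_mul, coeff_faulhaber_succ,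
    div_eq_mul_inv]
  intro j hj
  rw [coeff_C_mul, coeff_eq_zero_of_natDegree_lt (p := faulhaber j), mul_zero]
  exact (natDegree_faulhaber_le j).trans_lt (by simpa using mem_range.1 hj)

theorem eq_eval_indefiniteSum_of_sub_eq {h : ℕ → ℚ} {w : ℚ[X]}
    (hw : ∀ k, h (k + 1) - h k = w.eval (k : ℚ)) (k : ℕ) :
    h k = (C (h 0) + indefiniteSum w).eval (k : ℚ) := by
  rw [eval_add, eval_C, eval_indefiniteSum, eq_sum_range_sub h k]
  simp only [hw]

end Polynomial

theorem Function.Periodic.sum_range_add_eq {M : Type*} [AddCommGroup M] {g : ℤ → M} {N : ℕ}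
    (hg : Periodic g N) (t : ℤ) : ∑ j ∈ range N, g (t + j) = ∑ j ∈ range N, g j := by
  have h1 : Periodic (fun t => ∑ j ∈ range N, g (t + j)) 1 := fun t => by
    have e := (sum_range_succ' (fun j : ℕ => g (t + j)) N).symm.trans (sum_range_succ _ N)
    simp only [Nat.cast_add, Nat.cast_one, Nat.cast_zero, add_zero, hg t] at e
    simpa only [add_assoc, add_comm (1 : ℤ)] using add_right_cancel e
  simpa using h1.int_mul_eq t

/-- The sum of `g n * q.eval n` over the block `N k + r < n ≤ N k + r + N`, as a polynomial in
`k`. -/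
noncomputable def windowPoly (g : ℤ → ℚ) (q : ℚ[X]) (N r : ℕ) : ℚ[X] :=
  ∑ j ∈ range N, C (g (r + 1 + j : ℕ)) * q.comp (C (N : ℚ) * X + C ((r + 1 + j : ℕ) : ℚ))

section Window

variable {g : ℤ → ℚ} {N : ℕ} {q : ℚ[X]} {D : ℕ}

theorem Function.Periodic.sum_range_mul_eval_succ_sub (hg : Periodic g N) (r k : ℕ) :
    ∑ n ∈ range (N * (k + 1) + r + 1), g n * q.eval (n : ℚ)
      - ∑ n ∈ range (N * k + r + 1), g n * q.eval (n : ℚ) = (windowPoly g q N r).eval (k : ℚ) := by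
  rw [show N * (k + 1) + r + 1 = (N * k + r + 1) + N by ring, sum_range_add, add_sub_cancel_left,
    windowPoly, eval_finsetSum]
  refine sum_congr rfl fun j _ => ?_
  have hk : ((N * k + r + 1 + j : ℕ) : ℤ) = (r + 1 + j : ℕ) + k * N := by push_cast; ring
  rw [hk, hg.nat_mul k, eval_mul, eval_C, eval_comp]
  simp only [eval_add, eval_mul, eval_C, eval_X]
  push_cast
  ring_nf

theorem natDegree_windowPoly_le (hq : q.natDegree ≤ D) (r : ℕ) :
    (windowPoly g q N r).natDegree ≤ D :=
  natDegree_sum_le_of_forall_le _ _ fun _ _ =>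
    (natDegree_C_mul_le _ _).trans <| natDegree_comp_le.trans <|
      (Nat.mul_le_mul hq natDegree_linear_le).trans_eq (mul_one D)

theorem Function.Periodic.coeff_windowPoly (hg : Periodic g N) (hq : q.natDegree ≤ D) (r : ℕ) :
    (windowPoly g q N r).coeff D = (∑ j ∈ range N, g j) * (q.coeff D * N ^ D) := by
  simp only [windowPoly, finsetSum_coeff, coeff_C_mul,
    coeff_comp_of_natDegree_le hq natDegree_linear_le, ← hg.sum_range_add_eq (r + 1)]
  simp [coeff_one, sum_mul]

end Window

theorem Function.Periodic.exists_quasiPolynomial_sum_mul_eval {g : ℤ → ℚ} {N : ℕ} (hN : 0 < N)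
    (hg : Periodic g N) {q : ℚ[X]} {D : ℕ} (hq : q.natDegree ≤ D) :
    ∃ p : ℤ → ℚ[X], Periodic p N ∧
      (∀ m : ℕ, ∑ n ∈ range (m + 1), g n * q.eval (n : ℚ) = (p m).eval (m : ℚ)) ∧
      (∀ t, (p t).natDegree ≤ D + 1) ∧
      (∀ j, D < j → ∀ t t', (p t).coeff j = (p t').coeff j) := by
  set F : ℕ → ℚ := fun m => ∑ n ∈ range (m + 1), g n * q.eval (n : ℚ)
  -- on the residue class of `r`, `F (N * k + r)` is a polynomial in `k = (m - r) / N`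
  let P : ℕ → ℚ[X] := fun r =>
    (C (F r) + indefiniteSum (windowPoly g q N r)).comp (C (N : ℚ)⁻¹ * X - C ((r : ℚ) / N))
  have hP_eval (r k : ℕ) : (P r).eval ((N * k + r : ℕ) : ℚ) = F (N * k + r) := by
    have hk : (C (N : ℚ)⁻¹ * X - C ((r : ℚ) / N)).eval ((N * k + r : ℕ) : ℚ) = (k : ℚ) := by
      simp only [eval_sub, eval_mul, eval_C, eval_X]
      push_cast
      field_simp
      ring
    rw [eval_comp, hk]
    simpa using (eq_eval_indefiniteSum_of_sub_eq (h := fun k => F (N * k + r))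
      (hg.sum_range_mul_eval_succ_sub r) k).symm
  have hS_deg (r : ℕ) : (C (F r) + indefiniteSum (windowPoly g q N r)).natDegree ≤ D + 1 :=
    (natDegree_add_le _ _).trans <|
      max_le (by simp) (natDegree_indefiniteSum_le (natDegree_windowPoly_le hq r))
  have hP_deg (r : ℕ) : (P r).natDegree ≤ D + 1 :=
    natDegree_comp_le.trans <|
      (Nat.mul_le_mul (hS_deg r) (natDegree_C_mul_X_sub_C_le _ _)).trans_eq (mul_one _)
  have hP_coeff (r : ℕ) : (P r).coeff (D + 1) =
      (∑ j ∈ range N, g j) * (q.coeff D * N ^ D) / (D + 1) * (N : ℚ)⁻¹ ^ (D + 1) := by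
    rw [coeff_comp_of_natDegree_le (hS_deg r) (natDegree_C_mul_X_sub_C_le _ _), coeff_add,
      coeff_C_of_ne_zero D.succ_ne_zero, zero_add,
      coeff_indefiniteSum_succ (natDegree_windowPoly_le hq r), hg.coeff_windowPoly hq]
    simp
  refine ⟨fun t => P (t % N).toNat, fun t => by simp, fun m => ?_, fun t => hP_deg _, ?_⟩
  · have hm : ((m : ℤ) % N).toNat = m % N := by omega
    simpa only [hm, Nat.div_add_mod] using (hP_eval (m % N) (m / N)).symm
  · intro j hj t t'
    obtain rfl | hj := (Nat.succ_le_of_lt hj).eq_or_lt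
    · rw [hP_coeff, hP_coeff]
    · rw [coeff_eq_zero_of_natDegree_lt ((hP_deg _).trans_lt hj),
        coeff_eq_zero_of_natDegree_lt ((hP_deg _).trans_lt hj)]

noncomputable def floorSubst (p : ℤ → ℚ[X]) (α : ℚ) (t : ℤ) : ℚ[X] :=
  (p ⌊α * t⌋).comp (C α * X - C (Int.fract (α * t)))

section FloorSubst

variable {p : ℤ → ℚ[X]} {α : ℚ}

theorem eval_floorSubst (t : ℤ) :
    (floorSubst p α t).eval (t : ℚ) = (p ⌊α * t⌋).eval (⌊α * t⌋ : ℚ) := by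
  simp [floorSubst, eval_comp, Int.self_sub_fract]

theorem natDegree_floorSubst_le {D : ℕ} (hp : ∀ m, (p m).natDegree ≤ D) (t : ℤ) :
    (floorSubst p α t).natDegree ≤ D :=
  natDegree_comp_le.trans <|
    (Nat.mul_le_mul (hp _) (natDegree_C_mul_X_sub_C_le _ _)).trans_eq (mul_one D)

theorem coeff_floorSubst_of_natDegree_le {D : ℕ} (hp : ∀ m, (p m).natDegree ≤ D) (t : ℤ) :
    (floorSubst p α t).coeff D = (p ⌊α * t⌋).coeff D * α ^ D := by
  rw [floorSubst, coeff_comp_of_natDegree_le (hp _) (natDegree_C_mul_X_sub_C_le _ _)]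
  simp

theorem coeff_floorSubst_add {L n : ℤ} (hn : α * L = n) {l : ℕ}
    (hp : ∀ j, l ≤ j → ∀ m, (p (m + n)).coeff j = (p m).coeff j) (t : ℤ) :
    (floorSubst p α (t + L)).coeff l = (floorSubst p α t).coeff l := by
  have hshift : α * ((t + L : ℤ) : ℚ) = α * t + n := by push_cast; rw [mul_add, hn]
  rw [floorSubst, floorSubst, hshift, Int.floor_add_intCast, Int.fract_add_intCast]
  exact coeff_comp_eq_of_coeff_eq (natDegree_C_mul_X_sub_C_le _ _) fun j hj => hp j hj _

end FloorSubst

theorem Nat.dvd_mul_div_gcd (s a b : ℕ) : b ∣ s * b / s.gcd a := by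
  rw [Nat.mul_div_right_comm (s.gcd_dvd_left a)]
  exact dvd_mul_left _ _

theorem Nat.dvd_mul_of_mul_div_gcd_dvd_mul {s a b w : ℕ} (hb : 0 < b)
    (h : s * b / s.gcd a ∣ b * w) : s ∣ a * w := by
  have hg := s.gcd_dvd_left a
  rw [Nat.mul_div_right_comm hg, mul_comm, Nat.mul_dvd_mul_iff_left hb] at h
  calc s ∣ a * (s / s.gcd a) := by
        rw [← Nat.mul_div_assoc a hg, mul_comm a s, Nat.mul_div_assoc s (s.gcd_dvd_right a)]
        exact dvd_mul_right _ _
    _ ∣ a * w := mul_dvd_mul_left a h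

theorem Int.floor_div_mul_natCast {K : Type*} [Field K] [LinearOrder K] [IsStrictOrderedRing K]
    [FloorRing K] (a b t : ℕ) : ⌊(a / b : K) * t⌋ = ((a * t / b : ℕ) : ℤ) := by
  rw [div_mul_eq_mul_div, ← Nat.cast_mul, ← Int.cast_natCast (a * t), Int.floor_div_natCast,
    Int.floor_intCast, Int.natCast_div]

theorem coeff_sum_add_eq_of_periodic {R : Type*} [Semiring R] {p : ℕ → ℤ → R[X]} {s : ℕ → ℕ}
    (hper : ∀ k, Periodic (p k) (s k))
    (htop : ∀ k j, k < j → ∀ m m', (p k m).coeff j = (p k m').coeff j)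
    {l d : ℕ} {n : ℤ} (hn : ∀ k ∈ Icc l d, (s k : ℤ) ∣ n) {j : ℕ} (hj : l ≤ j) (m : ℤ) :
    (∑ k ∈ range (d + 1), p k (m + n)).coeff j = (∑ k ∈ range (d + 1), p k m).coeff j := by
  simp only [finsetSum_coeff]
  refine sum_congr rfl fun k hk => ?_
  by_cases hlk : l ≤ k
  · obtain ⟨v, rfl⟩ := hn k (mem_Icc.2 ⟨hlk, Nat.lt_succ_iff.1 (mem_range.1 hk)⟩)
    rw [mul_comm, ← smul_eq_mul, (hper k).zsmul v]
  · exact htop k j (by omega) _ _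

theorem sum_quasiPolynomial_general (d : ℕ) (f : ℤ → ℚ) (c : ℕ → ℤ → ℚ) (s : ℕ → ℕ)
    (hs : ∀ i, 0 < s i)
    (hper : ∀ i, ∀ t : ℤ, c i (t + s i) = c i t)
    (hf : ∀ t : ℤ, f t = ∑ i ∈ Finset.range (d + 1), c i t * (t : ℚ) ^ i)
    (a b : ℕ) (hb : 0 < b) :
    ∃ C : ℕ → ℤ → ℚ,
      (∀ t : ℕ, (∑ i ∈ Finset.range (a * t / b + 1), f (i : ℤ)) =
        ∑ i ∈ Finset.range (d + 2), C i (t : ℤ) * (t : ℚ) ^ i) ∧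
      (∀ t u : ℤ, C (d + 1) t = C (d + 1) u) ∧
      (∀ i ≤ d, ∀ t : ℤ,
        C i (t + ((Finset.Icc i d).lcm fun k => s k * b / Nat.gcd (s k) a)) = C i t) := by
  choose p hp_per hp_sum hp_deg hp_top using fun k =>
    Function.Periodic.exists_quasiPolynomial_sum_mul_eval (hs k) (hper k) (natDegree_X_pow_le k)
  set P : ℤ → ℚ[X] := fun m => ∑ k ∈ range (d + 1), p k m
  have hP_deg (m : ℤ) : (P m).natDegree ≤ d + 1 :=
    natDegree_sum_le_of_forall_le _ _ fun k hk => (hp_deg k m).trans (by simpa using mem_range.1 hk)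
  have hP_sum (m : ℕ) : ∑ n ∈ range (m + 1), f n = (P m).eval (m : ℚ) := by
    simp only [P, hf, eval_finsetSum, ← hp_sum, eval_pow, eval_X, Int.cast_natCast]
    exact sum_comm
  refine ⟨fun l t => (floorSubst P (a / b) t).coeff l, fun t => ?_, fun t u => ?_, fun l hl t => ?_⟩
  · rw [hP_sum, ← Int.cast_natCast (R := ℚ) (a * t / b), ← Int.floor_div_mul_natCast (K := ℚ),
      ← Int.cast_natCast (R := ℚ) t, ← eval_floorSubst,
      eval_eq_sum_range' (Nat.lt_succ_of_le (natDegree_floorSubst_le hP_deg _))]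
  · simp only [coeff_floorSubst_of_natDegree_le hP_deg, P, finsetSum_coeff]
    congr 1
    exact sum_congr rfl fun k hk => hp_top k _ (mem_range.1 hk) _ _
  · have hL (k : ℕ) (hk : k ∈ Icc l d) :
        s k * b / (s k).gcd a ∣ (Icc l d).lcm fun k => s k * b / (s k).gcd a :=
      Finset.dvd_lcm hk
    obtain ⟨w, hw⟩ := (Nat.dvd_mul_div_gcd (s l) a b).trans (hL l (mem_Icc.2 ⟨le_rfl, hl⟩))
    refine coeff_floorSubst_add (n := (a * w : ℕ)) (by rw [hw]; push_cast; field_simp)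
      (fun j hj m => coeff_sum_add_eq_of_periodic hp_per hp_top (fun k hk => ?_) hj m) t
    exact Int.natCast_dvd_natCast.2 (Nat.dvd_mul_of_mul_div_gcd_dvd_mul hb (hw ▸ hL k hk))

/-- Lemma on discrete integration of quasi-polynomials: if
`f(t) = c_0(t) + c_1(t)t + ⋯ + c_d(t)t^d` is a quasi-polynomial of degree `d`
with `c_i` periodic of period `s_i`, and `a, b` are positive integers, then
`F(t) = ∑_{i=0}^{⌊at/b⌋} f(i)` agrees (for nonnegative `t`) with a quasi-polynomial
`C_0(t) + ⋯ + C_{d+1}(t)t^{d+1}` of degree `d+1`, where `C_{d+1}` is constant and,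
for `0 ≤ i ≤ d`, `C_i` has period `lcm {S_d, …, S_i}` with `S_i = s_i·b/gcd(s_i, a)`. -/
theorem sum_quasiPolynomial (d : ℕ) (f : ℤ → ℚ) (c : ℕ → ℤ → ℚ) (s : ℕ → ℕ)
    (hs : ∀ i, 0 < s i)
    (hper : ∀ i, ∀ t : ℤ, c i (t + s i) = c i t)
    (hf : ∀ t : ℤ, f t = ∑ i ∈ Finset.range (d + 1), c i t * (t : ℚ) ^ i)
    (hdeg : ∃ t : ℤ, c d t ≠ 0)
    (a b : ℕ) (ha : 0 < a) (hb : 0 < b) :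
    ∃ C : ℕ → ℤ → ℚ,
      (∀ t : ℕ, (∑ i ∈ Finset.range (a * t / b + 1), f (i : ℤ)) =
        ∑ i ∈ Finset.range (d + 2), C i (t : ℤ) * (t : ℚ) ^ i) ∧
      (∀ t u : ℤ, C (d + 1) t = C (d + 1) u) ∧
      (∀ i ≤ d, ∀ t : ℤ,
        C i (t + ((Finset.Icc i d).lcm fun k => s k * b / Nat.gcd (s k) a)) = C i t) :=
  sum_quasiPolynomial_general d f c s hs hper hf a b hb
end

section
/- If f: ℤ → ℚ is a quasi-polynomial, then the function F(t) = ∑_{i=0}^{t} f(i), defined for nonnegative integers t, agrees with a quasi-polynomial p(t) for all nonnegative integers t, and moreover p(−t) = −∑_{i=−t+1}^{−1} f(i) for all positive integers t. -/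
/-!
Extend the partial sums to all of `ℤ` by `F t = ∑_{0 ≤ i ≤ t} f i - ∑_{t < i < 0} f i`; then
`F (t + 1) = F t + f (t + 1)` for every integer `t`, and both identities hold by construction.
To see that `F` is a quasi-polynomial, choose `N` such that every `m ↦ f (N m + r)` is a
polynomial in `m`. The forward difference of `m ↦ F (N m + r)` is `∑_{j < N} f (N m + r + j + 1)`,
a polynomial, so `m ↦ F (N m + r)` is a polynomial too (antidifferences of polynomials come from
Bernoulli polynomials). Being polynomial on each residue class mod `N` characterises
quasi-polynomials.
-/

/-- A quasi-polynomial is a function `f : ℤ → ℚ` of the form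
`f(t) = c_0(t) + c_1(t)t + ⋯ + c_d(t)t^d` with each `c_i` periodic. -/
def IsQuasiPolynomial (f : ℤ → ℚ) : Prop :=
  ∃ (d : ℕ) (c : ℕ → ℤ → ℚ) (s : ℕ → ℕ),
    (∀ i, 0 < s i) ∧ (∀ i, ∀ t : ℤ, c i (t + s i) = c i t) ∧
    ∀ t : ℤ, f t = ∑ i ∈ Finset.range (d + 1), c i t * (t : ℚ) ^ i

open Polynomial Finset

theorem Polynomial.exists_eval_add_one_sub_eval (Q : ℚ[X]) :
    ∃ H : ℚ[X], ∀ x : ℚ, H.eval (x + 1) - H.eval x = Q.eval x := by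
  induction Q using Polynomial.induction_on' with
  | add p q hp hq =>
    obtain ⟨Hp, hHp⟩ := hp
    obtain ⟨Hq, hHq⟩ := hq
    exact ⟨Hp + Hq, fun x => by simp only [eval_add, ← hHp x, ← hHq x]; ring⟩
  | monomial n a =>
    refine ⟨C (a / (n + 1)) * bernoulli (n + 1), fun x => ?_⟩
    have hn : (n : ℚ) + 1 ≠ 0 := by positivity
    simp only [eval_mul, eval_C, eval_monomial, add_comm x 1, bernoulli_eval_one_add,
      add_tsub_cancel_right]
    push_cast
    field_simp
    ring

theorem exists_eq_eval_of_sub_eq_eval {g : ℤ → ℚ} {Q : ℚ[X]}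
    (hg : ∀ m : ℤ, g (m + 1) - g m = Q.eval (m : ℚ)) :
    ∃ R : ℚ[X], ∀ m : ℤ, g m = R.eval (m : ℚ) := by
  obtain ⟨H, hH⟩ := Q.exists_eval_add_one_sub_eval
  have hconst : Function.Periodic (fun m : ℤ => g m - H.eval (m : ℚ)) 1 := fun m => by
    have := hH m
    have := hg m
    push_cast
    linarith
  refine ⟨H + C (g 0 - H.eval 0), fun m => ?_⟩
  have := hconst.int_mul_eq m
  simp only [mul_one, Int.cast_id, Int.cast_zero] at this
  simp only [eval_add, eval_C]
  linarith

theorem Function.Periodic.map_emod_int {α : Type*} {h : ℤ → α} {N : ℤ} (hh : Function.Periodic h N)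
    (t : ℤ) : h (t % N) = h t := by
  rw [Int.emod_def, mul_comm]
  exact hh.sub_int_mul_eq _

theorem Function.Periodic.exists_forall_le_int {h : ℤ → ℕ} {N : ℕ} (hN : 0 < N)
    (hh : Function.Periodic h N) : ∃ d, ∀ t, h t ≤ d := by
  have hrange : Set.range h ⊆ h '' Set.Ico 0 N := by
    rintro _ ⟨t, rfl⟩
    exact ⟨t % N, ⟨Int.emod_nonneg t (by omega), Int.emod_lt_of_pos t (by omega)⟩,
      hh.map_emod_int t⟩
  obtain ⟨d, hd⟩ := ((Set.finite_Ico _ _).image h).bddAbove.mono hrange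
  exact ⟨d, fun t => hd ⟨t, rfl⟩⟩

theorem isQuasiPolynomial_of_periodic_eval {f : ℤ → ℚ} {N : ℕ} (hN : 0 < N) {P : ℤ → ℚ[X]}
    (hP : Function.Periodic P N) (hf : ∀ t, f t = (P t).eval (t : ℚ)) : IsQuasiPolynomial f := by
  obtain ⟨d, hd⟩ := (hP.comp natDegree).exists_forall_le_int hN
  refine ⟨d, fun i t => (P t).coeff i, fun _ => N, fun _ => hN, fun i t => by dsimp only; rw [hP t],
    fun t => ?_⟩
  rw [hf, eval_eq_sum_range' (Nat.lt_succ_of_le (hd t))]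

theorem isQuasiPolynomial_of_eval_on_residues {g : ℤ → ℚ} {N : ℕ} (hN : 0 < N) {Q : ℤ → ℚ[X]}
    (hQ : ∀ r m : ℤ, g (N * m + r) = (Q r).eval (m : ℚ)) : IsQuasiPolynomial g := by
  refine isQuasiPolynomial_of_periodic_eval hN
    (P := fun t => (Q (t % N)).comp (C (N : ℚ)⁻¹ * (X - C ((t % N : ℤ) : ℚ))))
    (fun t => by simp only [Int.add_emod_right]) (fun t => ?_)
  have hN' : (N : ℚ) ≠ 0 := by exact_mod_cast hN.ne'
  have hdiv : (N : ℚ) * ((t / N : ℤ) : ℚ) = t - ((t % N : ℤ) : ℚ) := by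
    rw [Int.emod_def]; push_cast; ring
  conv_lhs => rw [← Int.mul_ediv_add_emod t N]
  rw [hQ, eval_comp]
  congr 1
  simp only [eval_mul, eval_C, eval_sub, eval_X, ← hdiv]
  field_simp

theorem IsQuasiPolynomial.exists_eval_on_residues {f : ℤ → ℚ} (hf : IsQuasiPolynomial f) :
    ∃ N : ℕ, 0 < N ∧ ∃ Q : ℤ → ℚ[X], ∀ r m : ℤ, f (N * m + r) = (Q r).eval (m : ℚ) := by
  obtain ⟨d, c, s, hs, hc, hf⟩ := hf
  set N := ∏ i ∈ range (d + 1), s i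
  refine ⟨N, prod_pos fun i _ => hs i,
    fun r => ∑ i ∈ range (d + 1), C (c i r) * (C (N : ℚ) * X + C (r : ℚ)) ^ i, fun r m => ?_⟩
  rw [hf, eval_finsetSum]
  refine sum_congr rfl fun i hi => ?_
  obtain ⟨k, hk⟩ : s i ∣ N := dvd_prod_of_mem s hi
  have hci : c i (N * m + r) = c i r := by
    rw [show (N : ℤ) * m + r = r + (k * m : ℤ) * (s i : ℤ) by rw [hk]; push_cast; ring]
    exact Function.Periodic.int_mul (hc i) _ r
  simp only [hci, eval_mul, eval_C, eval_pow, eval_add, eval_X]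
  push_cast
  ring

theorem IsQuasiPolynomial.of_add_one_eq {f g : ℤ → ℚ} (hf : IsQuasiPolynomial f)
    (hg : ∀ t, g (t + 1) = g t + f (t + 1)) : IsQuasiPolynomial g := by
  obtain ⟨N, hN, Q, hQ⟩ := hf.exists_eval_on_residues
  have htelescope (t : ℤ) (n : ℕ) : g (t + n) - g t = ∑ j ∈ range n, f (t + j + 1) := by
    have := Finset.sum_range_sub (fun i : ℕ => g (t + i)) n
    simp only [Nat.cast_succ, Nat.cast_zero, add_zero, ← add_assoc, hg,
      add_sub_cancel_left] at this
    exact this.symm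
  choose R hR using fun r : ℤ =>
    exists_eq_eval_of_sub_eq_eval (g := fun m => g (N * m + r))
      (Q := ∑ j ∈ range N, Q (r + j + 1)) fun m => by
        rw [show (N : ℤ) * (m + 1) + r = N * m + r + N by ring, htelescope, eval_finsetSum]
        exact sum_congr rfl fun j _ => by rw [← hQ]; ring_nf
  exact isQuasiPolynomial_of_eval_on_residues hN hR

section PartialSum

variable {M : Type*} [AddCommGroup M]

noncomputable def partialSum (f : ℤ → M) (t : ℤ) : M :=
  ∑ i ∈ Icc 0 t, f i - ∑ i ∈ Icc (t + 1) (-1), f i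

theorem partialSum_add_one (f : ℤ → M) (t : ℤ) :
    partialSum f (t + 1) = partialSum f t + f (t + 1) := by
  rcases le_or_gt 0 (t + 1) with h | h
  · have hIcc : Icc 0 (t + 1) = insert (t + 1) (Icc 0 t) := by
      ext; simp only [mem_Icc, mem_insert]; omega
    simp only [partialSum, hIcc, sum_insert (by simp : t + 1 ∉ Icc 0 t),
      Icc_eq_empty_of_lt (by omega : -1 < t + 1), Icc_eq_empty_of_lt (by omega : -1 < t + 1 + 1),
      sum_empty]
    abel
  · have hIcc : Icc (t + 1) (-1) = insert (t + 1) (Icc (t + 1 + 1) (-1)) := by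
      ext; simp only [mem_Icc, mem_insert]; omega
    simp only [partialSum, hIcc, sum_insert (by simp : t + 1 ∉ Icc (t + 1 + 1) (-1)),
      Icc_eq_empty_of_lt (by omega : t < 0), Icc_eq_empty_of_lt (by omega : t + 1 < 0), sum_empty]
    abel

theorem partialSum_natCast (f : ℤ → M) (t : ℕ) :
    partialSum f t = ∑ i ∈ range (t + 1), f i := by
  induction t with
  | zero => simp [partialSum]
  | succ n ih => rw [sum_range_succ, ← ih, Nat.cast_succ, partialSum_add_one]

theorem partialSum_neg_natCast (f : ℤ → M) {t : ℕ} (ht : 0 < t) :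
    partialSum f (-t) = -∑ i ∈ Icc (-(t : ℤ) + 1) (-1), f i := by
  simp [partialSum, Icc_eq_empty_of_lt (by omega : -(t : ℤ) < 0)]

end PartialSum

/-- Reciprocity for finite calculus: if `f` is a quasi-polynomial, then
`F(t) = ∑_{i=0}^t f(i)` agrees with a quasi-polynomial `p` for nonnegative integers `t`,
and `p(−t) = −∑_{i=−t+1}^{−1} f(i)` for all positive integers `t`. -/
theorem finite_calculus_reciprocity (f : ℤ → ℚ) (hf : IsQuasiPolynomial f) :
    ∃ p : ℤ → ℚ, IsQuasiPolynomial p ∧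
      (∀ t : ℕ, (∑ i ∈ Finset.range (t + 1), f (i : ℤ)) = p (t : ℤ)) ∧
      (∀ t : ℕ, 0 < t → p (-(t : ℤ)) = -∑ i ∈ Finset.Icc (-(t : ℤ) + 1) (-1 : ℤ), f i) :=
  ⟨partialSum f, hf.of_add_one_eq (partialSum_add_one f), fun t => (partialSum_natCast f t).symm,
    fun _ ht => partialSum_neg_natCast f ht⟩
end
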